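/- Fix θ ∈ (−π/2, π/2), r₀ > 0 and φ ∈ (−π/2, π/2). The function r ↦ d_ℍ(r·e^{iφ}, r₀·e^{iθ}) on (0,∞) attains its minimum at r = r₀, is strictly decreasing on (0, r₀), and is strictly increasing on (r₀, ∞). -/

import Mathlib

open Complex Filter Topology

/-- Pseudo-hyperbolic distance on the right half-plane ℍ = {Re z > 0}. -/
noncomputable def rhoH (z w : ℂ) : ℝ := ‖(z - w) / (z + (starRingEnd ℂ) w)‖

/-- Hyperbolic distance on the right half-plane. -/
noncomputable def dH (z w : ℂ) : ℝ := (1/2) * Real.log ((1 + rhoH z w) / (1 - rhoH z w))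

/-- `p` is a hyperbolic projection of `z` onto the curve `γ : [0,∞) → ℍ`. -/
def IsProjH (γ : ℝ → ℂ) (z p : ℂ) : Prop :=
  (∃ t ≥ (0:ℝ), p = γ t) ∧ ∀ t ≥ (0:ℝ), dH z p ≤ dH z (γ t)

/-- `f` is a hyperbolic holomorphic self-map of the right half-plane with
Denjoy–Wolff point ∞: it preserves ℍ, is holomorphic on ℍ, its iterates tend to ∞
uniformly on compact subsets of ℍ, and `f(z)/z → c` for some `c > 1` as `z → ∞`
within every sector `{|arg z| < φ}`, `φ ∈ (0, π/2)`. -/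
def HyperbolicAtInf (f : ℂ → ℂ) : Prop :=
  (∀ z : ℂ, 0 < z.re → 0 < (f z).re) ∧
  DifferentiableOn ℂ f {z : ℂ | 0 < z.re} ∧
  (∀ K : Set ℂ, K ⊆ {z : ℂ | 0 < z.re} → IsCompact K →
    ∀ M : ℝ, ∃ N : ℕ, ∀ n ≥ N, ∀ z ∈ K, M < ‖f^[n] z‖) ∧
  (∃ c : ℝ, 1 < c ∧ ∀ φ ∈ Set.Ioo (0:ℝ) (Real.pi/2), ∀ ε > (0:ℝ), ∃ R : ℝ,
    ∀ z : ℂ, 0 < z.re → |z.arg| < φ → R < ‖z‖ →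
      ‖f z / z - (c:ℂ)‖ < ε)

/-! For `z = r e^{iφ}` and `w = r₀ e^{iθ}` the identity `|z + w̄|² - |z - w|² = 4 Re z Re w` gives
`1 - ρ(z, w)² = 4 r₀ cos φ cos θ / (r + r₀²/r + 2 r₀ cos (φ + θ))`, with a positive numerator.
As `d_ℍ = artanh ∘ ρ`, the distance is therefore a strictly increasing function of `r + r₀²/r`,
which strictly decreases on `(0, r₀]` and strictly increases on `[r₀, ∞)`. -/

open ComplexConjugate

lemma normSq_add_conj_sub_normSq_sub (z w : ℂ) :
    normSq (z + conj w) - normSq (z - w) = 4 * z.re * w.re := by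
  simp only [normSq_apply, add_re, add_im, sub_re, sub_im, conj_re, conj_im]
  ring

lemma normSq_add_conj_pos {z w : ℂ} (hz : 0 < z.re) (hw : 0 < w.re) :
    0 < normSq (z + conj w) := by
  refine normSq_pos.2 fun h ↦ ?_
  have := congrArg re h
  simp only [add_re, conj_re, zero_re] at this
  linarith

lemma one_sub_rhoH_sq {z w : ℂ} (hz : 0 < z.re) (hw : 0 < w.re) :
    1 - rhoH z w ^ 2 = 4 * z.re * w.re / normSq (z + conj w) := by
  have := normSq_add_conj_pos hz hw
  rw [rhoH, norm_div, div_pow, ← normSq_eq_norm_sq, ← normSq_eq_norm_sq,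
    ← normSq_add_conj_sub_normSq_sub]
  field_simp

lemma rhoH_nonneg (z w : ℂ) : 0 ≤ rhoH z w := norm_nonneg _

lemma rhoH_lt_one {z w : ℂ} (hz : 0 < z.re) (hw : 0 < w.re) : rhoH z w < 1 := by
  have h : 0 < 1 - rhoH z w ^ 2 := by
    rw [one_sub_rhoH_sq hz hw]
    have := normSq_add_conj_pos hz hw
    positivity
  nlinarith [rhoH_nonneg z w]

lemma dH_eq_artanh {z w : ℂ} (h : rhoH z w ≤ 1) : dH z w = Real.artanh (rhoH z w) :=
  (Real.artanh_eq_half_log ⟨by linarith [rhoH_nonneg z w], h⟩).symm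

lemma dH_lt_dH_of_rhoH_lt {z w z' w' : ℂ} (h : rhoH z w < rhoH z' w') (h' : rhoH z' w' < 1) :
    dH z w < dH z' w' := by
  rw [dH_eq_artanh (h.trans h').le, dH_eq_artanh h'.le]
  exact Real.artanh_lt_artanh (by linarith [rhoH_nonneg z w]) h' h

lemma strictAntiOn_add_sq_div (c : ℝ) :
    StrictAntiOn (fun r : ℝ ↦ r + c ^ 2 / r) (Set.Ioc 0 c) := by
  rintro r ⟨hr, hrc⟩ r' ⟨hr', hr'c⟩ hlt
  have key : r + c ^ 2 / r - (r' + c ^ 2 / r') = (r' - r) * (c ^ 2 - r * r') / (r * r') := by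
    field_simp
    ring
  have : r * r' < c ^ 2 := by nlinarith
  have : 0 < (r' - r) * (c ^ 2 - r * r') / (r * r') := by
    apply div_pos (mul_pos _ _) (mul_pos hr hr') <;> linarith
  dsimp only
  linarith

lemma strictMonoOn_add_sq_div {c : ℝ} (hc : 0 < c) :
    StrictMonoOn (fun r : ℝ ↦ r + c ^ 2 / r) (Set.Ici c) := by
  rintro r hrc r' hr'c hlt
  have hr : 0 < r := hc.trans_le hrc
  have hr' : 0 < r' := hr.trans hlt
  have key : r' + c ^ 2 / r' - (r + c ^ 2 / r) = (r' - r) * (r * r' - c ^ 2) / (r * r') := by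
    field_simp
    ring
  have : c ^ 2 < r * r' := by nlinarith [Set.mem_Ici.1 hrc]
  have : 0 < (r' - r) * (r * r' - c ^ 2) / (r * r') := by
    apply div_pos (mul_pos _ _) (mul_pos hr hr') <;> linarith
  dsimp only
  linarith

section Polar

variable {r r' r₀ θ φ : ℝ}

lemma re_ofReal_mul_exp_mul_I (r φ : ℝ) : ((r : ℂ) * exp ((φ : ℂ) * I)).re = r * Real.cos φ := by
  rw [re_ofReal_mul, exp_ofReal_mul_I_re]

lemma re_ofReal_mul_exp_mul_I_pos (hr : 0 < r) (hφ : φ ∈ Set.Ioo (-(Real.pi / 2)) (Real.pi / 2)) :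
    0 < ((r : ℂ) * exp ((φ : ℂ) * I)).re := by
  rw [re_ofReal_mul_exp_mul_I]
  exact mul_pos hr (Real.cos_pos_of_mem_Ioo hφ)

lemma normSq_polar_add_conj_polar (r φ r₀ θ : ℝ) :
    normSq ((r : ℂ) * exp ((φ : ℂ) * I) + conj ((r₀ : ℂ) * exp ((θ : ℂ) * I))) =
      r ^ 2 + r₀ ^ 2 + 2 * r * r₀ * Real.cos (φ + θ) := by
  simp only [normSq_apply, add_re, add_im, conj_re, conj_im, re_ofReal_mul, im_ofReal_mul,
    exp_ofReal_mul_I_re, exp_ofReal_mul_I_im, Real.cos_add]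
  linear_combination r ^ 2 * Real.sin_sq_add_cos_sq φ + r₀ ^ 2 * Real.sin_sq_add_cos_sq θ

variable (hθ : θ ∈ Set.Ioo (-(Real.pi / 2)) (Real.pi / 2)) (hr₀ : 0 < r₀)
  (hφ : φ ∈ Set.Ioo (-(Real.pi / 2)) (Real.pi / 2))
include hθ hr₀ hφ

lemma add_sq_div_add_cos_pos (hr : 0 < r) : 0 < r + r₀ ^ 2 / r + 2 * r₀ * Real.cos (φ + θ) := by
  have h := normSq_add_conj_pos (re_ofReal_mul_exp_mul_I_pos hr hφ)
    (re_ofReal_mul_exp_mul_I_pos hr₀ hθ)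
  rw [normSq_polar_add_conj_polar] at h
  have : r + r₀ ^ 2 / r + 2 * r₀ * Real.cos (φ + θ) =
      (r ^ 2 + r₀ ^ 2 + 2 * r * r₀ * Real.cos (φ + θ)) / r := by
    field_simp
  rw [this]
  positivity

lemma one_sub_rhoH_polar_sq (hr : 0 < r) :
    1 - rhoH ((r : ℂ) * exp ((φ : ℂ) * I)) ((r₀ : ℂ) * exp ((θ : ℂ) * I)) ^ 2 =
      4 * r₀ * Real.cos φ * Real.cos θ / (r + r₀ ^ 2 / r + 2 * r₀ * Real.cos (φ + θ)) := by
  rw [one_sub_rhoH_sq (re_ofReal_mul_exp_mul_I_pos hr hφ) (re_ofReal_mul_exp_mul_I_pos hr₀ hθ),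
    normSq_polar_add_conj_polar, re_ofReal_mul_exp_mul_I, re_ofReal_mul_exp_mul_I]
  field_simp

lemma rhoH_polar_lt_rhoH_polar (hr : 0 < r) (hr' : 0 < r')
    (h : r + r₀ ^ 2 / r < r' + r₀ ^ 2 / r') :
    rhoH ((r : ℂ) * exp ((φ : ℂ) * I)) ((r₀ : ℂ) * exp ((θ : ℂ) * I)) <
      rhoH ((r' : ℂ) * exp ((φ : ℂ) * I)) ((r₀ : ℂ) * exp ((θ : ℂ) * I)) := by
  have hsq : 1 - rhoH ((r' : ℂ) * exp ((φ : ℂ) * I)) ((r₀ : ℂ) * exp ((θ : ℂ) * I)) ^ 2 <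
      1 - rhoH ((r : ℂ) * exp ((φ : ℂ) * I)) ((r₀ : ℂ) * exp ((θ : ℂ) * I)) ^ 2 := by
    rw [one_sub_rhoH_polar_sq hθ hr₀ hφ hr, one_sub_rhoH_polar_sq hθ hr₀ hφ hr']
    have := Real.cos_pos_of_mem_Ioo hφ
    have := Real.cos_pos_of_mem_Ioo hθ
    exact div_lt_div_of_pos_left (by positivity) (add_sq_div_add_cos_pos hθ hr₀ hφ hr)
      (by linarith)
  exact lt_of_pow_lt_pow_left₀ 2 (rhoH_nonneg _ _) (by linarith)

lemma dH_polar_lt_dH_polar (hr : 0 < r) (hr' : 0 < r')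
    (h : r + r₀ ^ 2 / r < r' + r₀ ^ 2 / r') :
    dH ((r : ℂ) * exp ((φ : ℂ) * I)) ((r₀ : ℂ) * exp ((θ : ℂ) * I)) <
      dH ((r' : ℂ) * exp ((φ : ℂ) * I)) ((r₀ : ℂ) * exp ((θ : ℂ) * I)) :=
  dH_lt_dH_of_rhoH_lt (rhoH_polar_lt_rhoH_polar hθ hr₀ hφ hr hr' h)
    (rhoH_lt_one (re_ofReal_mul_exp_mul_I_pos hr' hφ) (re_ofReal_mul_exp_mul_I_pos hr₀ hθ))

end Polar

/-- the function r ↦ d_ℍ(re^{iφ}, r₀e^{iθ}) has a minimum at r = r₀,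
is strictly decreasing on (0, r₀) and strictly increasing on (r₀, ∞). -/
theorem stmt13 (θ : ℝ) (hθ : θ ∈ Set.Ioo (-(Real.pi/2)) (Real.pi/2))
    (r₀ : ℝ) (hr₀ : 0 < r₀)
    (φ : ℝ) (hφ : φ ∈ Set.Ioo (-(Real.pi/2)) (Real.pi/2)) :
    (∀ r : ℝ, 0 < r →
        dH ((r₀ : ℂ) * Complex.exp ((φ : ℂ) * I)) ((r₀ : ℂ) * Complex.exp ((θ : ℂ) * I)) ≤
        dH ((r : ℂ) * Complex.exp ((φ : ℂ) * I)) ((r₀ : ℂ) * Complex.exp ((θ : ℂ) * I))) ∧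
    StrictAntiOn (fun r : ℝ =>
        dH ((r : ℂ) * Complex.exp ((φ : ℂ) * I)) ((r₀ : ℂ) * Complex.exp ((θ : ℂ) * I)))
      (Set.Ioo 0 r₀) ∧
    StrictMonoOn (fun r : ℝ =>
        dH ((r : ℂ) * Complex.exp ((φ : ℂ) * I)) ((r₀ : ℂ) * Complex.exp ((θ : ℂ) * I)))
      (Set.Ioi r₀) := by
  have hanti := strictAntiOn_add_sq_div r₀
  have hmono := strictMonoOn_add_sq_div hr₀
  refine ⟨fun r hr ↦ ?_, fun r hr r' hr' hrr' ↦ ?_, fun r hr r' hr' hrr' ↦ ?_⟩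
  · rcases lt_trichotomy r r₀ with h | rfl | h
    · exact (dH_polar_lt_dH_polar hθ hr₀ hφ hr₀ hr (hanti ⟨hr, h.le⟩ ⟨hr₀, le_rfl⟩ h)).le
    · exact le_rfl
    · exact (dH_polar_lt_dH_polar hθ hr₀ hφ hr₀ hr (hmono Set.self_mem_Ici h.le h)).le
  · exact dH_polar_lt_dH_polar hθ hr₀ hφ hr'.1 hr.1 (hanti ⟨hr.1, hr.2.le⟩ ⟨hr'.1, hr'.2.le⟩ hrr')
  · exact dH_polar_lt_dH_polar hθ hr₀ hφ (hr₀.trans hr) (hr₀.trans hr')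
      (hmono (Set.Ioi_subset_Ici_self hr) (Set.Ioi_subset_Ici_self hr') hrr')
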